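/- Let Q be a group, H a Q-group, and K an abelian group which is a Q-H module. Then the set of equivalence classes of Q-equivariant group extensions 0 → K → G → H → 1 inducing the given H-action on K and admitting a normalized Q-equivariant section s : H → G is in one-to-one correspondence with the elements of the invariant cohomology group HH²_Q(H, K). -/

import Mathlib

namespace InvariantCohomology

noncomputable section

/-- The `i`-th inner face of an inhomogeneous `(n+1)`-tuple: multiply the `i`-th and
`(i+1)`-st entries. -/
def fm {G : Type*} [Group G] {n : ℕ} (g : Fin (n + 1) → G) (i : Fin n) : Fin n → G :=
  fun j =>
    if (j : ℕ) < (i : ℕ) then g j.castSucc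
    else if j = i then g i.castSucc * g i.succ
    else g j.succ

variable (G Q M : Type*) [Group G] [Group Q] [MulDistribMulAction Q G]
  [AddCommGroup M] [DistribMulAction G M] [DistribMulAction Q M]

/-- Inhomogeneous `n`-cochains of `G` with values in `M`. -/
abbrev Cc (n : ℕ) : Type _ := (Fin n → G) → M

/-- The differential of the inhomogeneous cochain complex:
`(δf)(g₁,…,g_{n+1}) = g₁ • f(g₂,…,g_{n+1}) + ∑ᵢ (-1)ⁱ f(g₁,…,gᵢgᵢ₊₁,…,g_{n+1})
  + (-1)^{n+1} f(g₁,…,gₙ)`. -/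
def cb (n : ℕ) : Cc G M n →+ Cc G M (n + 1) where
  toFun f := fun g =>
    g 0 • f (Fin.tail g)
      + ∑ i : Fin n, ((-1 : ℤ) ^ ((i : ℕ) + 1)) • f (fm g i)
      + ((-1 : ℤ) ^ (n + 1)) • f (Fin.init g)
  map_zero' := by funext g; simp
  map_add' f₁ f₂ := by
    funext g
    simp only [Pi.add_apply, smul_add, Finset.sum_add_distrib]
    abel

/-- The differential, re-indexed as a map `Cⁿ⁻¹ → Cⁿ` (zero for `n = 0`). -/
def cdd : ∀ n : ℕ, Cc G M (n - 1) →+ Cc G M n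
  | 0 => 0
  | n + 1 => cb G M n

/-- The action of `q : Q` on cochains, `(q • f)(g₁,…,gₙ) = q • f(q⁻¹g₁,…,q⁻¹gₙ)`. -/
def qcc (q : Q) (n : ℕ) : Cc G M n →+ Cc G M n where
  toFun f := fun g => q • f (q⁻¹ • g)
  map_zero' := by funext g; simp
  map_add' f₁ f₂ := by funext g; simp [smul_add]

/-- The subgroup of `Q`-invariant cochains. -/
def invCc (n : ℕ) : AddSubgroup (Cc G M n) where
  carrier := { f | ∀ q : Q, qcc G Q M q n f = f }
  add_mem' := by intro a b ha hb q; rw [map_add, ha q, hb q]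
  zero_mem' := fun q => map_zero _
  neg_mem' := by intro a ha q; rw [map_neg, ha q]

/-- Invariant cocycles. -/
def ccycQ (n : ℕ) : AddSubgroup (Cc G M n) := (cb G M n).ker ⊓ invCc G Q M n

/-- Coboundaries of invariant cochains. -/
def cbdryQ (n : ℕ) : AddSubgroup (Cc G M n) := (invCc G Q M (n - 1)).map (cdd G M n)

/-- The invariant cohomology `HHⁿ_Q(G, M)`: the cohomology of the subcomplex of
`Q`-invariant cochains. -/
def HHQ (n : ℕ) : Type _ := ccycQ G Q M n ⧸ ((cbdryQ G Q M n).addSubgroupOf (ccycQ G Q M n))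

instance (n : ℕ) : AddCommGroup (HHQ G Q M n) := QuotientAddGroup.Quotient.addCommGroup _

end

end InvariantCohomology


universe u

open InvariantCohomology

variable (Q H K : Type u) [Group Q] [Group H] [MulDistribMulAction Q H]
  [AddCommGroup K] [DistribMulAction H K] [DistribMulAction Q K]

/-- A `Q`-equivariant extension `0 → K → G → H → 1` of the `Q`-group `H` by the
`Q`-`H` module `K`, inducing the given `H`-action on `K` by conjugation, and admitting a
normalized `Q`-equivariant section. -/
structure QExt : Type (u + 1) where
  /-- The middle group of the extension. -/
  G : Type u
  [grp : Group G]
  /-- The inclusion of `K` (written multiplicatively) in `G`. -/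
  ι : Multiplicative K →* G
  /-- The projection of `G` onto `H`. -/
  π : G →* H
  /-- The action of `Q` on `G` by group automorphisms. -/
  act : Q →* MulAut G
  ι_injective : Function.Injective ι
  π_surjective : Function.Surjective π
  /-- Exactness: the image of `K` is the kernel of `G → H`. -/
  range_eq_ker : ι.range = π.ker
  /-- The `Q`-action on `G` restricts to the given `Q`-action on `K`. -/
  act_ι : ∀ (q : Q) (k : Multiplicative K),
    act q (ι k) = ι (Multiplicative.ofAdd (q • k.toAdd))
  /-- The `Q`-action on `G` induces the given `Q`-action on `H`. -/
  act_π : ∀ (q : Q) (g : G), π (act q g) = q • π g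
  /-- The conjugation action of `G` on `K` is the given `H`-module structure. -/
  conj_ι : ∀ (g : G) (k : Multiplicative K),
    g * ι k * g⁻¹ = ι (Multiplicative.ofAdd (π g • k.toAdd))
  /-- The extension admits a normalized `Q`-equivariant section. -/
  exists_section : ∃ s : H → G, (∀ x : H, π (s x) = x) ∧ s 1 = 1
    ∧ ∀ (q : Q) (x : H), act q (s x) = s (q • x)

/-- Equivalence of `Q`-equivariant extensions: a `Q`-equivariant isomorphism of the middle
groups commuting with the inclusions of `K` and the projections onto `H`. -/
def QExtEquiv (E₁ E₂ : QExt Q H K) : Prop :=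
  letI := E₁.grp
  letI := E₂.grp
  ∃ θ : E₁.G ≃* E₂.G,
    (∀ k : Multiplicative K, θ (E₁.ι k) = E₂.ι k)
    ∧ (∀ g : E₁.G, E₂.π (θ g) = E₁.π g)
    ∧ ∀ (q : Q) (g : E₁.G), θ (E₁.act q g) = E₂.act q (θ g)

/-!
A normalized `Q`-equivariant section `s` of an extension `E` is recorded by its factor set
`σ (x, y) = s x * s y * (s (x * y))⁻¹ ∈ K`, a normalized `Q`-invariant 2-cocycle; another such
section `t` changes `σ` by the coboundary of the invariant 1-cochain `x ↦ t x * (s x)⁻¹`, so the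
class of `σ` in `HH²_Q(H, K)` depends only on `E`, and only on its equivalence class. Conversely,
`K × H` with multiplication `(a, x) * (b, y) = (a + x • b + σ (x, y), x * y)` is an extension
realizing `σ`, every extension is equivalent to the one built from its factor set, and
cohomologous cocycles give equivalent extensions. Finally every invariant class contains a
normalized cocycle, which gives surjectivity.
-/

namespace InvariantCohomology

open groupCohomology Multiplicative

variable {Q H K}

attribute [local instance] QExt.grp

lemma cb_one_comp (c : H → K) :
    cb H K 1 (c ∘ Equiv.funUnique (Fin 1) H) =
      (fun p : H × H => p.1 • c p.2 - c (p.1 * p.2) + c p.1) ∘ finTwoArrowEquiv H := by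
  funext g
  simp [cb, fm, Fin.tail, Fin.init, sub_eq_add_neg]

lemma cb_two_comp (σ : H × H → K) (g : Fin 3 → H) :
    cb H K 2 (σ ∘ finTwoArrowEquiv H) g =
      g 0 • σ (g 1, g 2) - σ (g 0 * g 1, g 2) + σ (g 0, g 1 * g 2) - σ (g 0, g 1) := by
  simp [cb, fm, Fin.tail, Fin.init, Fin.sum_univ_two, sub_eq_add_neg]
  abel

omit [DistribMulAction H K] in
lemma mem_invCc_iff {n : ℕ} (f : Cc H K n) :
    f ∈ invCc H Q K n ↔ ∀ (q : Q) (g : Fin n → H), f (q • g) = q • f g := by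
  refine forall_congr' fun q => ⟨fun hq g => ?_, fun hq => funext fun g => ?_⟩
  · rw [← congrFun hq (q • g)]
    simp [qcc]
  · simp [qcc, ← hq]

omit [DistribMulAction H K] in
lemma comp_funUnique_mem_invCc_iff (c : H → K) :
    c ∘ Equiv.funUnique (Fin 1) H ∈ invCc H Q K 1 ↔ ∀ (q : Q) (x : H), c (q • x) = q • c x := by
  rw [mem_invCc_iff]
  exact forall_congr' fun q => ((Equiv.funUnique (Fin 1) H).symm.forall_congr_left
    (p := fun x => c (q • x) = q • c x)).symm

lemma comp_finTwoArrowEquiv_mem_ccycQ_iff (σ : H × H → K) :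
    σ ∘ finTwoArrowEquiv H ∈ ccycQ H Q K 2 ↔
      IsCocycle₂ σ ∧ ∀ (q : Q) (p : H × H), σ (q • p) = q • σ p := by
  have cb_eq_zero_iff (g : Fin 3 → H) : cb H K 2 (σ ∘ finTwoArrowEquiv H) g = 0 ↔
      σ (g 0 * g 1, g 2) + σ (g 0, g 1) = g 0 • σ (g 1, g 2) + σ (g 0, g 1 * g 2) := by
    rw [cb_two_comp, ← sub_eq_zero (a := σ (g 0 * g 1, g 2) + _), ← neg_eq_zero, iff_iff_eq]
    congr 1
    abel
  rw [ccycQ, AddSubgroup.mem_inf, AddMonoidHom.mem_ker, mem_invCc_iff, funext_iff]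
  refine and_congr ⟨fun h x y z => ?_, fun h g => (cb_eq_zero_iff g).2 (h _ _ _)⟩
    (forall_congr' fun q => ((finTwoArrowEquiv H).symm.forall_congr_left
      (p := fun p => σ (q • p) = q • σ p)).symm)
  simpa using (cb_eq_zero_iff ![x, y, z]).1 (h _)

lemma mk_eq_mk_iff {f₁ f₂ : Cc H K 2} (hf₁ : f₁ ∈ ccycQ H Q K 2) (hf₂ : f₂ ∈ ccycQ H Q K 2) :
    (QuotientAddGroup.mk ⟨f₁, hf₁⟩ : HHQ H Q K 2) = QuotientAddGroup.mk ⟨f₂, hf₂⟩ ↔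
      ∃ c ∈ invCc H Q K 1, cb H K 1 c = f₂ - f₁ := by
  rw [QuotientAddGroup.eq, AddSubgroup.mem_addSubgroupOf, AddSubgroup.coe_add,
    AddSubgroup.coe_neg, neg_add_eq_sub]
  exact AddSubgroup.mem_map

abbrev twistedGroup {σ : H × H → K} (hσ : IsCocycle₂ σ) (h11 : σ (1, 1) = 0) :
    Group (K × H) where
  mul p p' := (p.1 + p.2 • p'.1 + σ (p.2, p'.2), p.2 * p'.2)
  one := (0, 1)
  inv p := (-(p.2⁻¹ • p.1) - σ (p.2⁻¹, p.2), p.2⁻¹)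
  mul_assoc := fun (a, x) (b, y) (c, z) => by
    refine Prod.ext ?_ (mul_assoc x y z)
    change a + x • b + σ (x, y) + (x * y) • c + σ (x * y, z)
      = a + x • (b + y • c + σ (y, z)) + σ (x, y * z)
    simp only [smul_add, mul_smul]
    linear_combination (norm := abel) hσ x y z
  one_mul := fun (a, x) => by
    refine Prod.ext ?_ (one_mul x)
    change 0 + (1 : H) • a + σ (1, x) = a
    rw [map_one_fst_of_isCocycle₂ hσ, h11, one_smul, zero_add, add_zero]
  mul_one := fun (a, x) => by
    refine Prod.ext ?_ (mul_one x)
    change a + x • (0 : K) + σ (x, 1) = a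
    rw [map_one_snd_of_isCocycle₂ hσ, h11, smul_zero, add_zero, add_zero]
  inv_mul_cancel := fun (a, x) => by
    refine Prod.ext ?_ (inv_mul_cancel x)
    change -(x⁻¹ • a) - σ (x⁻¹, x) + x⁻¹ • a + σ (x⁻¹, x) = 0
    abel

variable (Q H K) in
@[ext]
structure NormInvCocycle₂ where
  toFun : H × H → K
  isCocycle₂ : IsCocycle₂ toFun
  map_one_one : toFun (1, 1) = 0
  map_smul : ∀ (q : Q) (p : H × H), toFun (q • p) = q • toFun p

namespace NormInvCocycle₂

instance : CoeFun (NormInvCocycle₂ Q H K) fun _ => H × H → K := ⟨toFun⟩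

variable (σ σ' : NormInvCocycle₂ Q H K)

lemma map_one_fst (x : H) : σ (1, x) = 0 :=
  (map_one_fst_of_isCocycle₂ σ.isCocycle₂ x).trans σ.map_one_one

lemma map_one_snd (x : H) : σ (x, 1) = 0 := by
  rw [map_one_snd_of_isCocycle₂ σ.isCocycle₂, σ.map_one_one, smul_zero]

lemma map_mul_inv (x : H) : σ (x, x⁻¹) = x • σ (x⁻¹, x) := by
  have := smul_map_inv_sub_map_inv_of_isCocycle₂ σ.isCocycle₂ x
  rwa [σ.map_one_one, σ.map_one_snd, sub_self, sub_eq_zero, eq_comm] at this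

def cls : HHQ H Q K 2 :=
  QuotientAddGroup.mk ⟨σ ∘ finTwoArrowEquiv H,
    (comp_finTwoArrowEquiv_mem_ccycQ_iff _).2 ⟨σ.isCocycle₂, σ.map_smul⟩⟩

lemma cls_eq_cls_iff : σ.cls = σ'.cls ↔ ∃ c : H → K, (∀ (q : Q) (x : H), c (q • x) = q • c x) ∧
      ∀ x y : H, x • c y - c (x * y) + c x = σ' (x, y) - σ (x, y) := by
  have cb_eq_iff (c : H → K) : cb H K 1 (c ∘ Equiv.funUnique (Fin 1) H) =
        σ' ∘ finTwoArrowEquiv H - σ ∘ finTwoArrowEquiv H ↔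
      ∀ x y : H, x • c y - c (x * y) + c x = σ' (x, y) - σ (x, y) := by
    rw [cb_one_comp, ← Pi.sub_comp, (finTwoArrowEquiv H).surjective.injective_comp_right.eq_iff,
      funext_iff, Prod.forall]
    rfl
  refine (mk_eq_mk_iff _ _).trans ⟨?_, ?_⟩
  · rintro ⟨c, hc, hcb⟩
    have hc' : c = (c ∘ (Equiv.funUnique (Fin 1) H).symm) ∘ Equiv.funUnique (Fin 1) H := by
      rw [Function.comp_assoc, Equiv.symm_comp_self, Function.comp_id]
    rw [hc'] at hc hcb
    exact ⟨_, (comp_funUnique_mem_invCc_iff _).1 hc, (cb_eq_iff _).1 hcb⟩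
  · rintro ⟨c, hc, hcb⟩
    exact ⟨_, (comp_funUnique_mem_invCc_iff c).2 hc, (cb_eq_iff c).2 hcb⟩

variable (hc : ∀ (q : Q) (x : H) (a : K), q • x • a = (q • x) • q • a)
include hc

lemma cls_surjective : Function.Surjective (cls : NormInvCocycle₂ Q H K → HHQ H Q K 2) := by
  intro x
  obtain ⟨⟨f, hf⟩, rfl⟩ := QuotientAddGroup.mk_surjective x
  obtain ⟨τ, rfl⟩ : ∃ τ : H × H → K, f = τ ∘ finTwoArrowEquiv H :=
    ⟨f ∘ (finTwoArrowEquiv H).symm, by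
      rw [Function.comp_assoc, Equiv.symm_comp_self, Function.comp_id]⟩
  obtain ⟨hτ, hτq⟩ := (comp_finTwoArrowEquiv_mem_ccycQ_iff τ).1 hf
  set v := τ (1, 1)
  have hv (q : Q) : q • v = v := by
    simpa [Prod.smul_mk] using (hτq q (1, 1)).symm
  -- `p ↦ p.1 • v` is the coboundary of the constant invariant cochain `v`
  let σ : NormInvCocycle₂ Q H K :=
    { toFun := fun p => τ p - p.1 • v
      isCocycle₂ := fun x y z => by
        simp only [smul_sub, mul_smul]
        linear_combination (norm := abel) hτ x y z
      map_one_one := by simp [v]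
      map_smul := fun q p => by
        simp only [hτq, Prod.smul_fst, smul_sub, hc, hv] }
  refine ⟨σ, (mk_eq_mk_iff _ _).2 ⟨fun _ => v, (mem_invCc_iff _).2 fun q _ => (hv q).symm, ?_⟩⟩
  funext g
  simp [cb, σ]

def toQExt : QExt Q H K :=
  letI := twistedGroup σ.isCocycle₂ σ.map_one_one
  { G := K × H
    ι := { toFun := fun k => (k.toAdd, 1)
           map_one' := rfl
           map_mul' := fun k k' => Prod.ext (by
             change _ = _ + (1 : H) • _ + σ (1, 1)
             rw [σ.map_one_one, one_smul, add_zero, toAdd_mul]) (one_mul 1).symm }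
    π := { toFun := Prod.snd
           map_one' := rfl
           map_mul' := fun _ _ => rfl }
    act := { toFun := fun q =>
               { toFun := (q • ·)
                 invFun := (q⁻¹ • ·)
                 left_inv := fun p => inv_smul_smul q p
                 right_inv := fun p => smul_inv_smul q p
                 map_mul' := fun (a, x) (b, y) => by
                   refine Prod.ext ?_ (smul_mul' q x y)
                   change q • (a + x • b + σ (x, y)) = q • a + (q • x) • q • b + σ (q • (x, y))
                   rw [smul_add, smul_add, σ.map_smul, hc] }
             map_one' := MulEquiv.ext fun p => one_smul Q p
             map_mul' := fun q q' => MulEquiv.ext fun p => mul_smul q q' p }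
    ι_injective := fun k k' h => toAdd.injective (congrArg Prod.fst h)
    π_surjective := fun x => ⟨(0, x), rfl⟩
    range_eq_ker := by
      ext ⟨a, x⟩
      constructor
      · rintro ⟨k, hk⟩
        exact congrArg Prod.snd hk.symm
      · intro (hx : x = 1)
        exact ⟨ofAdd a, by rw [hx]; rfl⟩
    act_ι := fun q k => Prod.ext rfl (smul_one q)
    act_π := fun _ _ => rfl
    conj_ι := fun (a, x) k => by
      refine Prod.ext ?_ (show x * 1 * x⁻¹ = 1 by group)
      change a + x • k.toAdd + σ (x, 1) + (x * 1) • (-(x⁻¹ • a) - σ (x⁻¹, x))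
          + σ (x * 1, x⁻¹) = x • k.toAdd
      simp only [mul_one, σ.map_one_snd, smul_sub, smul_neg, smul_inv_smul, σ.map_mul_inv]
      abel
    exists_section := ⟨fun x => (0, x), fun _ => rfl, rfl, fun q _ => Prod.ext (smul_zero q) rfl⟩ }

lemma toQExt_equiv_of_cls_eq {σ σ' : NormInvCocycle₂ Q H K} (h : σ.cls = σ'.cls) :
    QExtEquiv Q H K (σ.toQExt hc) (σ'.toQExt hc) := by
  obtain ⟨c, hcq, hcσ⟩ := (cls_eq_cls_iff σ σ').1 h
  have hc1 : c 1 = 0 := by simpa [σ.map_one_one, σ'.map_one_one] using hcσ 1 1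
  refine ⟨{ toFun := fun p => (p.1 - c p.2, p.2)
            invFun := fun p => (p.1 + c p.2, p.2)
            left_inv := fun p => Prod.ext (sub_add_cancel _ _) rfl
            right_inv := fun p => Prod.ext (add_sub_cancel_right _ _) rfl
            map_mul' := fun (a, x) (b, y) => Prod.ext ?_ rfl },
    fun k => Prod.ext (show k.toAdd - c 1 = k.toAdd by rw [hc1, sub_zero]) rfl, fun _ => rfl,
    fun q (a, x) => Prod.ext ?_ rfl⟩
  · change a + x • b + σ (x, y) - c (x * y) = a - c x + x • (b - c y) + σ' (x, y)
    rw [smul_sub, sub_eq_iff_eq_add'.1 (hcσ x y).symm]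
    abel
  · change q • a - c (q • x) = q • (a - c x)
    rw [hcq, smul_sub]

end NormInvCocycle₂

end InvariantCohomology

namespace QExtEquiv

variable {Q H K}

attribute [local instance] QExt.grp

lemma symm {E₁ E₂ : QExt Q H K} (h : QExtEquiv Q H K E₁ E₂) : QExtEquiv Q H K E₂ E₁ := by
  obtain ⟨θ, hι, hπ, hact⟩ := h
  refine ⟨θ.symm, fun k => ?_, fun g => ?_, fun q g => ?_⟩
  · rw [θ.symm_apply_eq, hι]
  · rw [← hπ, θ.apply_symm_apply]
  · rw [θ.symm_apply_eq, hact, θ.apply_symm_apply]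

lemma trans {E₁ E₂ E₃ : QExt Q H K} (h₁₂ : QExtEquiv Q H K E₁ E₂)
    (h₂₃ : QExtEquiv Q H K E₂ E₃) : QExtEquiv Q H K E₁ E₃ := by
  obtain ⟨θ, hι, hπ, hact⟩ := h₁₂
  obtain ⟨θ', hι', hπ', hact'⟩ := h₂₃
  exact ⟨θ.trans θ', fun k => by simp [hι, hι'], fun g => by simp [hπ, hπ'],
    fun q g => by simp [hact, hact']⟩

end QExtEquiv

namespace QExt

open Multiplicative groupCohomology

variable {Q H K}

attribute [local instance] QExt.grp

variable (E : QExt Q H K)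

lemma π_ι (k : Multiplicative K) : E.π (E.ι k) = 1 := by
  rw [← MonoidHom.mem_ker, ← E.range_eq_ker]
  exact ⟨k, rfl⟩

lemma ι_ofAdd_inj {a b : K} : E.ι (ofAdd a) = E.ι (ofAdd b) ↔ a = b :=
  E.ι_injective.eq_iff.trans ofAdd.injective.eq_iff

lemma mul_ι (g : E.G) (k : Multiplicative K) :
    g * E.ι k = E.ι (ofAdd (E.π g • k.toAdd)) * g := by
  rw [← E.conj_ι, inv_mul_cancel_right]

/-- Only meaningful on the kernel of `E.π`. -/
noncomputable def ιInv (g : E.G) : K := toAdd (Function.invFun E.ι g)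

lemma ι_ιInv {g : E.G} (hg : E.π g = 1) : E.ι (ofAdd (E.ιInv g)) = g := by
  have : g ∈ E.ι.range := E.range_eq_ker ▸ hg
  exact Function.invFun_eq this

lemma ιInv_ι (k : Multiplicative K) : E.ιInv (E.ι k) = k.toAdd :=
  congrArg toAdd (Function.leftInverse_invFun E.ι_injective k)

structure Section where
  toFun : H → E.G
  π_apply : ∀ x, E.π (toFun x) = x
  map_one : toFun 1 = 1
  act_apply : ∀ (q : Q) (x : H), E.act q (toFun x) = toFun (q • x)

instance : CoeFun E.Section fun _ => H → E.G := ⟨Section.toFun⟩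

noncomputable def sec : E.Section :=
  ⟨_, E.exists_section.choose_spec.1, E.exists_section.choose_spec.2.1,
    E.exists_section.choose_spec.2.2⟩

namespace Section

variable {E} (s t : E.Section)

noncomputable def factorSet (p : H × H) : K := E.ιInv (s p.1 * s p.2 * (s (p.1 * p.2))⁻¹)

lemma factorSet_eq_iff (x y : H) (a : K) :
    s.factorSet (x, y) = a ↔ s x * s y = E.ι (ofAdd a) * s (x * y) := by
  have hπ : E.π (s x * s y * (s (x * y))⁻¹) = 1 := by
    simp [s.π_apply]
  rw [← E.ι_ofAdd_inj, factorSet, E.ι_ιInv hπ, mul_inv_eq_iff_eq_mul]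

lemma mul_apply_eq (x y : H) : s x * s y = E.ι (ofAdd (s.factorSet (x, y))) * s (x * y) :=
  (s.factorSet_eq_iff x y _).1 rfl

lemma isCocycle₂_factorSet : IsCocycle₂ s.factorSet := fun x y z => by
  rw [← E.ι_ofAdd_inj, ← mul_left_inj (s (x * y * z))]
  calc E.ι (ofAdd (s.factorSet (x * y, z) + s.factorSet (x, y))) * s (x * y * z)
      = s x * s y * s z := by
        rw [add_comm, ofAdd_add, map_mul, mul_assoc, ← mul_apply_eq, ← mul_assoc,
          ← mul_apply_eq]
    _ = s x * (s y * s z) := mul_assoc _ _ _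
    _ = E.ι (ofAdd (x • s.factorSet (y, z) + s.factorSet (x, y * z))) * s (x * y * z) := by
        rw [mul_apply_eq, ← mul_assoc, mul_ι, s.π_apply, mul_assoc, mul_apply_eq, ← mul_assoc,
          ofAdd_add, map_mul, mul_assoc x, toAdd_ofAdd]

lemma factorSet_one_one : s.factorSet (1, 1) = 0 := by
  simp [factorSet_eq_iff, s.map_one]

lemma factorSet_smul (q : Q) (p : H × H) : s.factorSet (q • p) = q • s.factorSet p := by
  rw [Prod.smul_def, factorSet_eq_iff, ← smul_mul', ← s.act_apply, ← s.act_apply,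
    ← s.act_apply, ← map_mul, mul_apply_eq, map_mul, E.act_ι, toAdd_ofAdd]

noncomputable def cocycle : NormInvCocycle₂ Q H K :=
  ⟨s.factorSet, s.isCocycle₂_factorSet, s.factorSet_one_one, s.factorSet_smul⟩

lemma cls_cocycle_eq : s.cocycle.cls = t.cocycle.cls := by
  set c : H → K := fun x => E.ιInv (t x * (s x)⁻¹)
  have ht (x : H) : t x = E.ι (ofAdd (c x)) * s x := by
    rw [E.ι_ιInv (by simp [s.π_apply, t.π_apply]), inv_mul_cancel_right]
  refine (NormInvCocycle₂.cls_eq_cls_iff _ _).2 ⟨c, fun q x => ?_, fun x y => ?_⟩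
  · rw [← E.ι_ofAdd_inj, ← mul_left_inj (s (q • x)), ← ht, ← s.act_apply, ← t.act_apply, ht,
      map_mul, E.act_ι, toAdd_ofAdd]
  · change _ = t.factorSet (x, y) - s.factorSet (x, y)
    rw [eq_sub_iff_add_eq, eq_comm, t.factorSet_eq_iff]
    calc t x * t y = E.ι (ofAdd (c x)) * (s x * E.ι (ofAdd (c y))) * s y := by
          rw [ht, ht]; group
      _ = E.ι (ofAdd (c x + x • c y + s.factorSet (x, y))) * s (x * y) := by
          rw [mul_ι, s.π_apply, mul_assoc, mul_assoc, mul_apply_eq]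
          simp only [ofAdd_add, map_mul, mul_assoc, toAdd_ofAdd]
      _ = E.ι (ofAdd (x • c y - c (x * y) + c x + s.factorSet (x, y))) * t (x * y) := by
          rw [ht, ← mul_assoc, ← map_mul, ← ofAdd_add]
          congr 3
          abel

variable {E₁ E₂ : QExt Q H K}

def map (s : E₁.Section) (θ : E₁.G ≃* E₂.G) (hπ : ∀ g, E₂.π (θ g) = E₁.π g)
    (hact : ∀ (q : Q) (g : E₁.G), θ (E₁.act q g) = E₂.act q (θ g)) : E₂.Section where
  toFun x := θ (s x)
  π_apply x := by rw [hπ, s.π_apply]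
  map_one := by rw [s.map_one, θ.map_one]
  act_apply q x := by rw [← hact, s.act_apply]

lemma cocycle_map (s : E₁.Section) (θ : E₁.G ≃* E₂.G)
    (hι : ∀ k : Multiplicative K, θ (E₁.ι k) = E₂.ι k) (hπ : ∀ g, E₂.π (θ g) = E₁.π g)
    (hact : ∀ (q : Q) (g : E₁.G), θ (E₁.act q g) = E₂.act q (θ g)) :
    (s.map θ hπ hact).cocycle = s.cocycle := by
  ext ⟨x, y⟩
  change (s.map θ hπ hact).factorSet (x, y) = s.factorSet (x, y)
  rw [factorSet_eq_iff]
  change θ (s x) * θ (s y) = E₂.ι _ * θ (s (x * y))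
  rw [← hι, ← map_mul, ← map_mul, mul_apply_eq]

lemma toQExt_cocycle_equiv (hc : ∀ (q : Q) (x : H) (a : K), q • x • a = (q • x) • q • a) :
    QExtEquiv Q H K (s.cocycle.toQExt hc) E := by
  have hπ (a : K) (x : H) : E.π (E.ι (ofAdd a) * s x) = x := by
    rw [map_mul, π_ι, s.π_apply, one_mul]
  refine ⟨{ toFun := fun p => E.ι (ofAdd p.1) * s p.2
            invFun := fun g => (E.ιInv (g * (s (E.π g))⁻¹), E.π g)
            left_inv := fun (a, x) => Prod.ext ?_ (hπ a x)
            right_inv := fun g => ?_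
            map_mul' := fun (a, x) (b, y) => ?_ },
    fun k => ?_, fun (a, x) => hπ a x, fun q (a, x) => ?_⟩
  · change E.ιInv (E.ι (ofAdd a) * s x * (s (E.π (E.ι (ofAdd a) * s x)))⁻¹) = a
    rw [hπ, mul_inv_cancel_right, ιInv_ι, toAdd_ofAdd]
  · change E.ι (ofAdd (E.ιInv (g * (s (E.π g))⁻¹))) * s (E.π g) = g
    rw [E.ι_ιInv (by rw [map_mul, map_inv, s.π_apply, mul_inv_cancel]), inv_mul_cancel_right]
  · change E.ι (ofAdd (a + x • b + s.factorSet (x, y))) * s (x * y)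
      = E.ι (ofAdd a) * s x * (E.ι (ofAdd b) * s y)
    rw [mul_assoc, ← mul_assoc (s x), mul_ι, s.π_apply, mul_assoc, s.mul_apply_eq]
    simp only [ofAdd_add, map_mul, mul_assoc, toAdd_ofAdd]
  · change E.ι (ofAdd k.toAdd) * s 1 = E.ι k
    rw [s.map_one, mul_one, ofAdd_toAdd]
  · change E.ι (ofAdd (q • a)) * s (q • x) = E.act q (E.ι (ofAdd a) * s x)
    rw [map_mul, E.act_ι, s.act_apply, toAdd_ofAdd]

end Section

noncomputable def cls : HHQ H Q K 2 := E.sec.cocycle.cls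

lemma cls_eq_of_equiv {E₁ E₂ : QExt Q H K} (h : QExtEquiv Q H K E₁ E₂) : E₁.cls = E₂.cls := by
  obtain ⟨θ, hι, hπ, hact⟩ := h
  rw [cls, cls, ← (E₁.sec.map θ hπ hact).cls_cocycle_eq, E₁.sec.cocycle_map θ hι hπ hact]

lemma equiv_of_cls_eq (hc : ∀ (q : Q) (x : H) (a : K), q • x • a = (q • x) • q • a)
    {E₁ E₂ : QExt Q H K} (h : E₁.cls = E₂.cls) : QExtEquiv Q H K E₁ E₂ :=
  (E₁.sec.toQExt_cocycle_equiv hc).symm.trans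
    ((NormInvCocycle₂.toQExt_equiv_of_cls_eq hc h).trans (E₂.sec.toQExt_cocycle_equiv hc))

end QExt

namespace InvariantCohomology.NormInvCocycle₂

attribute [local instance] QExt.grp

variable {Q H K} (σ : NormInvCocycle₂ Q H K)
  (hc : ∀ (q : Q) (x : H) (a : K), q • x • a = (q • x) • q • a)

def zeroSection : (σ.toQExt hc).Section where
  toFun x := ((0 : K), x)
  π_apply _ := rfl
  map_one := rfl
  act_apply q _ := Prod.ext (smul_zero q) rfl

lemma cocycle_zeroSection : (σ.zeroSection hc).cocycle = σ := by
  ext ⟨x, y⟩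
  change (σ.zeroSection hc).factorSet (x, y) = σ (x, y)
  rw [QExt.Section.factorSet_eq_iff]
  refine Prod.ext ?_ (one_mul (x * y)).symm
  change 0 + x • (0 : K) + σ (x, y) = σ (x, y) + (1 : H) • 0 + σ (1, x * y)
  rw [σ.map_one_fst]
  simp

lemma cls_toQExt : (σ.toQExt hc).cls = σ.cls := by
  rw [QExt.cls, QExt.Section.cls_cocycle_eq _ (σ.zeroSection hc), cocycle_zeroSection]

end InvariantCohomology.NormInvCocycle₂

/-- The set of equivalence classes of `Q`-equivariant extensions
`0 → K → G → H → 1` admitting a normalized `Q`-equivariant section is in one-to-one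
correspondence with the invariant cohomology group `HH²_Q(H, K)`. -/
theorem qext_classes_equiv_HH2
    (hc : ∀ (q : Q) (x : H) (a : K), q • x • a = (q • x) • q • a) :
    Nonempty (Quot (QExtEquiv Q H K) ≃ HHQ H Q K 2) := by
  refine ⟨Equiv.ofBijective (Quot.lift QExt.cls fun _ _ => QExt.cls_eq_of_equiv) ⟨?_, ?_⟩⟩
  · rintro ⟨E₁⟩ ⟨E₂⟩ h
    exact Quot.sound (QExt.equiv_of_cls_eq hc h)
  · intro x
    obtain ⟨σ, rfl⟩ := NormInvCocycle₂.cls_surjective hc x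
    exact ⟨Quot.mk _ (σ.toQExt hc), σ.cls_toQExt hc⟩
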